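/- arXiv:1905.00047 — 4 statements merged into one kernel-verified Lean document; each statement's English description precedes it below -/
import Mathlib

section
/- Let v ⋖ w be a covering relation in strong Bruhat order on S_n with w = v·t_{ij}, i < j. Then v⁻¹ ⋖ w⁻¹ is also a covering relation, and b_{v⋖w} = c_{v⁻¹⋖w⁻¹}, where for a cover u ⋖ u·t_{pq} (p<q) we set b = #{k : p < k < q, u(k) > u(q)} and c = #{k > q : u(p) < u(k) < u(q)}. -/
open Equiv Finset
open scoped Classical

/-- Number of inversions (Coxeter length) of a permutation of `Fin n`. -/
def invCount {n : ℕ} (v : Equiv.Perm (Fin n)) : ℕ :=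
  (Finset.univ.filter (fun p : Fin n × Fin n => p.1 < p.2 ∧ v p.2 < v p.1)).card

/-- `a` statistic of a (candidate) cover `v ⋖ v·t_{ij}`. -/
def aQ {n : ℕ} (v : Equiv.Perm (Fin n)) (i j : Fin n) : ℕ :=
  (Finset.univ.filter (fun k : Fin n => k < i ∧ v i < v k ∧ v k < v j)).card

/-- `b` statistic. -/
def bQ {n : ℕ} (v : Equiv.Perm (Fin n)) (i j : Fin n) : ℕ :=
  (Finset.univ.filter (fun k : Fin n => i < k ∧ k < j ∧ v j < v k)).card

/-- `c` statistic. -/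
def cQ {n : ℕ} (v : Equiv.Perm (Fin n)) (i j : Fin n) : ℕ :=
  (Finset.univ.filter (fun k : Fin n => j < k ∧ v i < v k ∧ v k < v j)).card

/-- `d` statistic. -/
def dQ {n : ℕ} (v : Equiv.Perm (Fin n)) (i j : Fin n) : ℕ :=
  (Finset.univ.filter (fun k : Fin n => i < k ∧ k < j ∧ v k < v i)).card

/-- Covering relation in strong Bruhat order. -/
def BruhatCov {n : ℕ} (v w : Equiv.Perm (Fin n)) : Prop :=
  ∃ i j : Fin n, i < j ∧ w = v * Equiv.swap i j ∧ invCount w = invCount v + 1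

/-- A permutation and its inverse have the same number of inversions. -/
lemma invCount_inv {n : ℕ} (g : Equiv.Perm (Fin n)) : invCount g⁻¹ = invCount g := by
  unfold invCount
  exact Finset.card_nbij' (fun p => (g⁻¹ p.2, g⁻¹ p.1)) (fun p => (g p.2, g p.1))
    (by intro a ha; simp at ha ⊢; exact ⟨ha.2, ha.1⟩)
    (by intro a ha; simp at ha ⊢; exact ⟨ha.2, ha.1⟩)
    (by intro a ha; simp) (by intro a ha; simp)

/-- `b` statistic of `v` equals `c` statistic of the inverse data. -/
lemma b_eq_c_aux {n : ℕ} (v : Equiv.Perm (Fin n)) (i j : Fin n) :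
    bQ v i j = cQ v⁻¹ (v i) (v j) := by
  unfold bQ cQ
  exact Finset.card_nbij' (fun k => v k) (fun k => v⁻¹ k)
    (by intro k hk; simp at hk ⊢; exact ⟨hk.2.2, hk.1, hk.2.1⟩)
    (by intro k hk; simp at hk ⊢; exact ⟨hk.2.1, hk.2.2, hk.1⟩)
    (by intro k hk; simp) (by intro k hk; simp)

/-- The basic conjugation identity for the inverse of a cover. -/
lemma inv_mul_swap {n : ℕ} (v : Equiv.Perm (Fin n)) (i j : Fin n) :
    (v * Equiv.swap i j)⁻¹ = v⁻¹ * Equiv.swap (v i) (v j) := by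
  rw [Equiv.swap_apply_apply, mul_inv_rev, Equiv.swap_inv]
  group

theorem inv_cover_and_b_eq_c {n : ℕ} (v : Equiv.Perm (Fin n)) (i j : Fin n) (hij : i < j)
    (hcov : invCount (v * Equiv.swap i j) = invCount v + 1) :
    BruhatCov v⁻¹ (v * Equiv.swap i j)⁻¹ ∧ bQ v i j = cQ v⁻¹ (v i) (v j) := by
  refine ⟨?_, b_eq_c_aux v i j⟩
  have hlen : invCount ((v * Equiv.swap i j)⁻¹) = invCount v⁻¹ + 1 := by
    rw [invCount_inv, invCount_inv, hcov]
  have hne : v i ≠ v j := fun h => hij.ne (v.injective h)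
  rcases hne.lt_or_gt with h | h
  · exact ⟨v i, v j, h, inv_mul_swap v i j, hlen⟩
  · exact ⟨v j, v i, h, by rw [inv_mul_swap v i j, Equiv.swap_comm], hlen⟩
end

section
/- Let v ⋖ w be a covering relation in strong Bruhat order on S_n with w = v·t_{ij}, i < j, and let w₀ be the longest element (w₀(k) = n+1-k). Then w₀w ⋖ w₀v is a covering relation and b_{v⋖w} = d_{w₀w⋖w₀v}, where for a cover u ⋖ u·t_{pq} (p<q), b = #{k : p<k<q, u(k) > u(q)} and d = #{k : p<k<q, u(k) < u(p)}. -/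
open Equiv Finset
open scoped Classical

lemma invCount_rev_add {n : ℕ} (u : Equiv.Perm (Fin n)) :
    invCount (Fin.revPerm * u) + invCount u =
      ((Finset.univ : Finset (Fin n × Fin n)).filter (fun p => p.1 < p.2)).card := by
  classical
  have h1 : invCount (Fin.revPerm * u) =
      (((Finset.univ : Finset (Fin n × Fin n)).filter (fun p => p.1 < p.2)).filter
        (fun p => u p.1 < u p.2)).card := by
    unfold invCount
    rw [Finset.filter_filter]
    congr 1
    apply Finset.filter_congr
    intro p _
    simp [Equiv.Perm.mul_apply, Fin.rev_lt_rev]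
  have h2 : invCount u =
      (((Finset.univ : Finset (Fin n × Fin n)).filter (fun p => p.1 < p.2)).filter
        (fun p => ¬ (u p.1 < u p.2))).card := by
    unfold invCount
    rw [Finset.filter_filter]
    congr 1
    apply Finset.filter_congr
    intro p _
    constructor
    · rintro ⟨h1, h2⟩; exact ⟨h1, not_lt.mpr h2.le⟩
    · rintro ⟨h1, h2⟩
      refine ⟨h1, lt_of_le_of_ne (not_lt.mp h2) ?_⟩
      intro he
      exact absurd (u.injective he) (ne_of_lt h1).symm
  rw [h1, h2]
  exact Finset.card_filter_add_card_filter_not _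

theorem w0_cover_and_b_eq_d {n : ℕ} (v : Equiv.Perm (Fin n)) (i j : Fin n) (hij : i < j)
    (hcov : invCount (v * Equiv.swap i j) = invCount v + 1) :
    BruhatCov (Fin.revPerm * (v * Equiv.swap i j)) (Fin.revPerm * v) ∧
      bQ v i j = dQ (Fin.revPerm * (v * Equiv.swap i j)) i j := by
  classical
  constructor
  · refine ⟨i, j, hij, ?_, ?_⟩
    · rw [mul_assoc, mul_assoc, Equiv.swap_mul_self, mul_one]
    · have ha := invCount_rev_add v
      have hb := invCount_rev_add (v * Equiv.swap i j)
      rw [hcov] at hb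
      omega
  · unfold bQ dQ
    congr 1
    apply Finset.filter_congr
    intro k _
    have hwi : ((Fin.revPerm * (v * Equiv.swap i j) : Equiv.Perm (Fin n))) i = Fin.rev (v j) := by
      simp [Equiv.Perm.mul_apply]
    constructor
    · rintro ⟨h1, h2, h3⟩
      refine ⟨h1, h2, ?_⟩
      have hk : ((Fin.revPerm * (v * Equiv.swap i j) : Equiv.Perm (Fin n))) k = Fin.rev (v k) := by
        simp [Equiv.Perm.mul_apply, Equiv.swap_apply_of_ne_of_ne (ne_of_gt h1) (ne_of_lt h2)]
      rw [hk, hwi, Fin.rev_lt_rev]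
      exact h3
    · rintro ⟨h1, h2, h3⟩
      refine ⟨h1, h2, ?_⟩
      have hk : ((Fin.revPerm * (v * Equiv.swap i j) : Equiv.Perm (Fin n))) k = Fin.rev (v k) := by
        simp [Equiv.Perm.mul_apply, Equiv.swap_apply_of_ne_of_ne (ne_of_gt h1) (ne_of_lt h2)]
      rw [hk, hwi, Fin.rev_lt_rev] at h3
      exact h3
end

section
/- Let I ⊂ ℂ[x_1,...,x_n] be the ideal generated by symmetric polynomials with zero constant term, and define the linear operator Δ on monomials by Δ(x^γ) = (Σ_{i=1}^n (n-i-γ_i)x_i)·x^γ, extended to satisfy the Leibniz rule Δ(fg) = fΔ(g) + gΔ(f). Then Δ maps I into I, i.e., Δ descends to a well-defined operator on the coinvariant algebra ℂ[x_1,...,x_n]/I. -/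
open MvPolynomial Finset
open scoped Classical

/-- The ideal of `ℂ[x₁,…,xₙ]` generated by the symmetric polynomials with zero
constant term (so that the quotient is the coinvariant algebra). -/
noncomputable def coinvIdeal (n : ℕ) : Ideal (MvPolynomial (Fin n) ℂ) :=
  Ideal.span {q : MvPolynomial (Fin n) ℂ | q.IsSymmetric ∧ constantCoeff q = 0}

/-!
By the hypothesis on monomials, `D f = L f - T f` with `L = ∑ᵢ (n - 1 - i) xᵢ` and
`T = ∑ᵢ xᵢ² ∂ᵢ`, since `xᵢ² ∂ᵢ x^γ = γᵢ xᵢ x^γ`. Multiplication by `L` preserves any ideal.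
`T` is a derivation that commutes with permutations of the variables and raises degrees, so it
sends symmetric polynomials without constant term to such polynomials; by the Leibniz rule it
then preserves the ideal they generate.
-/

theorem Derivation.apply_mem_span {R A : Type*} [CommSemiring R] [CommSemiring A] [Algebra R A]
    (D : Derivation R A A) {s : Set A} (hs : ∀ a ∈ s, D a ∈ Ideal.span s) {x : A}
    (hx : x ∈ Ideal.span s) : D x ∈ Ideal.span s := by
  induction hx using Submodule.span_induction with
  | mem a ha => exact hs a ha
  | zero => simp
  | add x y _ _ hx hy => simpa using add_mem hx hy
  | smul a x hx hDx =>
    rw [smul_eq_mul, D.leibniz, smul_eq_mul, smul_eq_mul]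
    exact add_mem (Ideal.mul_mem_left _ a hDx) (Ideal.mul_mem_right _ _ hx)

namespace MvPolynomial

variable {σ R : Type*} [Fintype σ] [CommSemiring R]

noncomputable def sqEulerDerivation : Derivation R (MvPolynomial σ R) (MvPolynomial σ R) :=
  ∑ i : σ, (X i ^ 2 : MvPolynomial σ R) • pderiv i

theorem sqEulerDerivation_apply (p : MvPolynomial σ R) :
    sqEulerDerivation p = ∑ i, X i ^ 2 * pderiv i p := by
  rw [sqEulerDerivation, ← Derivation.coeFnAddMonoidHom_apply, map_sum, Finset.sum_apply]
  simp only [Derivation.coeFnAddMonoidHom_apply, Derivation.smul_apply, smul_eq_mul]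

theorem sqEulerDerivation_monomial (m : σ →₀ ℕ) (r : R) :
    sqEulerDerivation (monomial m r) = ∑ i, m i • (X i * monomial m r) := by
  simp_rw [sqEulerDerivation_apply, sq, mul_assoc, X_mul_pderiv_monomial, mul_smul_comm]

theorem constantCoeff_sqEulerDerivation (p : MvPolynomial σ R) :
    constantCoeff (sqEulerDerivation p) = 0 := by
  simp [sqEulerDerivation_apply]

theorem IsSymmetric.sqEulerDerivation {p : MvPolynomial σ R} (hp : p.IsSymmetric) :
    (sqEulerDerivation p).IsSymmetric := by
  intro e
  have rename_term (i : σ) :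
      rename e (X i ^ 2 * pderiv i p) = X (e i) ^ 2 * pderiv (e i) p := by
    rw [map_mul, map_pow, rename_X, ← pderiv_rename e.injective, hp e]
  simp_rw [sqEulerDerivation_apply, map_sum, rename_term]
  exact Equiv.sum_comp e fun j => X j ^ 2 * pderiv j p

theorem sqEulerDerivation_mem_span_isSymmetric {p : MvPolynomial σ R}
    (hp : p ∈ Ideal.span {q : MvPolynomial σ R | q.IsSymmetric ∧ constantCoeff q = 0}) :
    sqEulerDerivation p ∈
      Ideal.span {q : MvPolynomial σ R | q.IsSymmetric ∧ constantCoeff q = 0} := by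
  refine sqEulerDerivation.apply_mem_span (fun q hq => ?_) hp
  exact Ideal.subset_span ⟨hq.1.sqEulerDerivation, constantCoeff_sqEulerDerivation q⟩

end MvPolynomial

theorem eq_mul_sub_sqEulerDerivation {n : ℕ}
    (D : MvPolynomial (Fin n) ℂ →ₗ[ℂ] MvPolynomial (Fin n) ℂ)
    (hD : ∀ γ : Fin n →₀ ℕ,
      D (monomial γ 1) =
        (∑ i : Fin n, C (((n : ℤ) - 1 - (i : ℕ) - (γ i : ℕ) : ℤ) : ℂ) * X i) * monomial γ 1)
    (f : MvPolynomial (Fin n) ℂ) :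
    D f = (∑ i : Fin n, C (((n : ℤ) - 1 - (i : ℕ) : ℤ) : ℂ) * X i) * f - sqEulerDerivation f := by
  suffices D = LinearMap.mulLeft ℂ (∑ i : Fin n, C (((n : ℤ) - 1 - (i : ℕ) : ℤ) : ℂ) * X i) -
      (sqEulerDerivation (σ := Fin n) (R := ℂ)).toLinearMap by
    rw [this]; rfl
  refine linearMap_ext fun γ => LinearMap.ext_ring ?_
  simp only [LinearMap.comp_apply, LinearMap.sub_apply, LinearMap.mulLeft_apply,
    Derivation.coeFn_coe, hD, sqEulerDerivation_monomial, sum_mul, ← sum_sub_distrib]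
  refine sum_congr rfl fun i _ => ?_
  push_cast
  simp [sub_mul, nsmul_eq_mul, mul_assoc]

/-- Any linear operator `D` acting on monomials by
`D(x^γ) = (Σᵢ (n - i - γᵢ) xᵢ) · x^γ` (1-indexed; `0`-indexed as `n - 1 - i - γᵢ ∈ ℤ`)
maps the coinvariant ideal into itself, and hence descends to the coinvariant algebra. -/
theorem delta_maps_ideal_to_ideal {n : ℕ}
    (D : MvPolynomial (Fin n) ℂ →ₗ[ℂ] MvPolynomial (Fin n) ℂ)
    (hD : ∀ γ : Fin n →₀ ℕ,
      D (monomial γ 1) =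
        (∑ i : Fin n,
            C (((n : ℤ) - 1 - (i : ℕ) - (γ i : ℕ) : ℤ) : ℂ) * X i) *
          monomial γ 1)
    (f : MvPolynomial (Fin n) ℂ) (hf : f ∈ coinvIdeal n) :
    D f ∈ coinvIdeal n := by
  rw [eq_mul_sub_sqEulerDerivation D hD f]
  exact sub_mem (Ideal.mul_mem_left _ _ hf) (sqEulerDerivation_mem_span_isSymmetric hf)
end

section
/- In the coinvariant algebra ℂ[x_1,...,x_n]/I, with M the operator of multiplication by β_1x_1 + ... + β_{n-1}x_{n-1} and Δ as above, define R = Δ - (multiplication by (n-1)x_1 + (n-2)x_2 + ... + x_{n-1}), and set M_1 = M, M_{k+1} = [M_k, R]. Then M_k equals multiplication by (k-1)!·(β_1 x_1^k + β_2 x_2^k + ... + β_{n-1} x_{n-1}^k). -/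
open MvPolynomial Finset
open scoped Classical

/-- `commIter M R k` is `M_{k+1}`, where `M_1 = M` and `M_{k+1} = [M_k, R]`. -/
noncomputable def commIter {n : ℕ}
    (M R : Module.End ℂ (MvPolynomial (Fin n) ℂ)) : ℕ → Module.End ℂ (MvPolynomial (Fin n) ℂ)
  | 0 => M
  | k + 1 => commIter M R k * R - R * commIter M R k

/-!
On a monomial, `Δ(x^γ) - (∑ (n-1-i) xᵢ) x^γ = -(∑ γᵢ xᵢ) x^γ = -E(x^γ)`, where
`E = ∑ xᵢ² ∂ᵢ` is a derivation; so `R = -E`. For a derivation, the commutator of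
multiplication by `p` with `-E` is multiplication by `E p`, hence `M_{k+1}` is multiplication
by `E^k(∑ βᵢ xᵢ)`, and `E^k xᵢ = k! xᵢ^{k+1}` because `E xᵢ = xᵢ²`. The identity therefore
holds already in `ℂ[x₁,…,xₙ]`, before passing to the quotient.
-/

namespace Derivation

variable {R A : Type*} [CommSemiring R]

theorem toLinearMap_mul_mulLeft_sub [CommRing A] [Algebra R A] (δ : Derivation R A A) (a : A) :
    (δ : Module.End R A) * LinearMap.mulLeft R a - LinearMap.mulLeft R a * δ =
      LinearMap.mulLeft R (δ a) := by
  ext b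
  simp [leibniz, mul_comm]

theorem pow_apply_of_apply_eq_sq [CommSemiring A] [Algebra R A] (δ : Derivation R A A) {x : A} (hx : δ x = x ^ 2) (k : ℕ) :
    ((δ : Module.End R A) ^ k) x = k.factorial • x ^ (k + 1) := by
  induction k with
  | zero => simp
  | succ k ih =>
    rw [pow_succ', Module.End.mul_apply, ih, map_nsmul, coeFn_coe, leibniz_pow, hx,
      smul_eq_mul, ← pow_add, Nat.add_sub_cancel, Nat.factorial_succ, mul_nsmul', smul_comm]

end Derivation

namespace MvPolynomial

variable (σ R : Type*) [CommSemiring R] [Fintype σ]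

noncomputable def sqXDeriv : Derivation R (MvPolynomial σ R) (MvPolynomial σ R) :=
  ∑ i : σ, (X i ^ 2 : MvPolynomial σ R) • pderiv i

variable {σ R}

theorem sqXDeriv_apply (p : MvPolynomial σ R) :
    sqXDeriv σ R p = ∑ i, X i ^ 2 * pderiv i p := by
  rw [sqXDeriv, ← Derivation.coeFnAddMonoidHom_apply, map_sum, Finset.sum_apply]
  rfl

theorem sqXDeriv_X (i : σ) : sqXDeriv σ R (X i) = X i ^ 2 := by
  simp [sqXDeriv_apply, pderiv_X, Pi.single_apply]

theorem sqXDeriv_monomial (γ : σ →₀ ℕ) (r : R) :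
    sqXDeriv σ R (monomial γ r) = (∑ i, C (γ i : R) * X i) * monomial γ r := by
  simp only [sqXDeriv_apply, sum_mul]
  refine sum_congr rfl fun i _ => ?_
  rw [sq, mul_assoc, X_mul_pderiv_monomial]
  simp only [nsmul_eq_mul, map_natCast]
  ring

end MvPolynomial

theorem commIter_mulLeft_neg_derivation {n : ℕ}
    (δ : Derivation ℂ (MvPolynomial (Fin n) ℂ) (MvPolynomial (Fin n) ℂ))
    (p : MvPolynomial (Fin n) ℂ) (k : ℕ) :
    commIter (LinearMap.mulLeft ℂ p) (-(δ : Module.End ℂ _)) k =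
      LinearMap.mulLeft ℂ (((δ : Module.End ℂ _) ^ k) p) := by
  induction k with
  | zero => rfl
  | succ k ih =>
    rw [commIter, ih, pow_succ', Module.End.mul_apply, Derivation.coeFn_coe,
      ← δ.toLinearMap_mul_mulLeft_sub]
    refine LinearMap.ext fun f => ?_
    simp only [LinearMap.sub_apply, Module.End.mul_apply, LinearMap.neg_apply, map_neg]
    abel

theorem sub_mulLeft_eq_neg_sqXDeriv {n : ℕ} (D : Module.End ℂ (MvPolynomial (Fin n) ℂ))
    (hD : ∀ γ : Fin n →₀ ℕ,
      D (monomial γ 1) =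
        (∑ i : Fin n,
            C (((n : ℤ) - 1 - (i : ℕ) - (γ i : ℕ) : ℤ) : ℂ) * X i) * monomial γ 1) :
    D - LinearMap.mulLeft ℂ (∑ i : Fin n, C ((n - 1 - (i : ℕ) : ℕ) : ℂ) * X i) =
      -(sqXDeriv (Fin n) ℂ : Module.End ℂ _) := by
  refine (basisMonomials (Fin n) ℂ).ext fun γ => ?_
  have hcoef (i : Fin n) :
      (((n : ℤ) - 1 - (i : ℕ) - (γ i : ℕ) : ℤ) : ℂ) - ((n - 1 - (i : ℕ) : ℕ) : ℂ) = -(γ i : ℂ) := by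
    have := i.isLt
    rw [Nat.cast_sub (by omega), Nat.cast_sub (by omega)]
    push_cast
    ring
  simp only [coe_basisMonomials, LinearMap.sub_apply, LinearMap.neg_apply,
    LinearMap.mulLeft_apply, Derivation.coeFn_coe, hD, sqXDeriv_monomial, ← sum_sub_distrib,
    ← sub_mul, ← map_sub, hcoef, map_neg, neg_mul, sum_neg_distrib]

/-- With `Δ(x^γ) = (Σᵢ (n-i-γᵢ)xᵢ)x^γ`, `R = Δ - mult((n-1)x₁ + ⋯ + x_{n-1})`,
`M = mult(β₁x₁ + ⋯ + β_{n-1}x_{n-1})`, `M₁ = M`, and `M_{k+1} = [M_k, R]`,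
the operator `M_k` equals multiplication by `(k-1)!(β₁x₁^k + ⋯ + β_{n-1}x_{n-1}^k)`
on the coinvariant algebra `ℂ[x₁,…,xₙ]/I`. -/
theorem commIter_eq_mul {n : ℕ} (β : Fin n → ℂ)
    (D : Module.End ℂ (MvPolynomial (Fin n) ℂ))
    (hD : ∀ γ : Fin n →₀ ℕ,
      D (monomial γ 1) =
        (∑ i : Fin n,
            C (((n : ℤ) - 1 - (i : ℕ) - (γ i : ℕ) : ℤ) : ℂ) * X i) * monomial γ 1)
    (R : Module.End ℂ (MvPolynomial (Fin n) ℂ))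
    (hR : R = D - LinearMap.mulLeft ℂ (∑ i : Fin n, C ((n - 1 - (i : ℕ) : ℕ) : ℂ) * X i))
    (M : Module.End ℂ (MvPolynomial (Fin n) ℂ))
    (hM : M = LinearMap.mulLeft ℂ
      (∑ i ∈ Finset.univ.filter (fun i : Fin n => (i : ℕ) + 1 < n), C (β i) * X i))
    (k : ℕ) (hk : 1 ≤ k) (f : MvPolynomial (Fin n) ℂ) :
    commIter M R (k - 1) f -
      ((k - 1).factorial : ℂ) •
        ((∑ i ∈ Finset.univ.filter (fun i : Fin n => (i : ℕ) + 1 < n), C (β i) * X i ^ k) * f)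
      ∈ coinvIdeal n := by
  obtain ⟨m, rfl⟩ : ∃ m, k = m + 1 := ⟨k - 1, by omega⟩
  have hpow (i : Fin n) : ((sqXDeriv (Fin n) ℂ : Module.End ℂ _) ^ m) (C (β i) * X i) =
      (m.factorial : ℂ) • (C (β i) * X i ^ (m + 1)) := by
    rw [← smul_eq_C_mul, map_smul, Derivation.pow_apply_of_apply_eq_sq _ (sqXDeriv_X i),
      ← smul_eq_C_mul, Nat.cast_smul_eq_nsmul, smul_comm]
  rw [hR, sub_mulLeft_eq_neg_sqXDeriv D hD, hM, Nat.add_sub_cancel,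
    commIter_mulLeft_neg_derivation, LinearMap.mulLeft_apply, map_sum,
    sum_congr rfl fun i _ => hpow i, ← smul_sum, smul_mul_assoc, sub_self]
  exact (coinvIdeal n).zero_mem
end
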